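/- If a sequent Γ ⇒ Δ is provable in Grz_∞, then for every finite set of formulas Λ the sequent Λ*, Γ ⇒ Δ is provable in Grz_Seq, where Λ* = {□(A → □A) : A ∈ Λ}. -/

import Mathlib

/-- Modal formulas built from ⊥ and propositional variables using → and □. -/
inductive Fml : Type
  | bot : Fml
  | var : ℕ → Fml
  | imp : Fml → Fml → Fml
  | box : Fml → Fml
deriving DecidableEq

/-- A sequent `Γ ⇒ Δ`: a pair of finite multisets of formulas. -/
abbrev Sequent : Type := Multiset Fml × Multiset Fml

/-- The sequent calculus `Grz_Seq` (with the cut rule available when the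
Boolean parameter is `true`, i.e. `GrzSeq true` is `Grz_Seq + cut` and
`GrzSeq false` is `Grz_Seq`). -/
inductive GrzSeq : Bool → Sequent → Prop
  | ax (c : Bool) (Γ Δ : Multiset Fml) (A : Fml) :
      GrzSeq c (A ::ₘ Γ, A ::ₘ Δ)
  | axBot (c : Bool) (Γ Δ : Multiset Fml) :
      GrzSeq c (Fml.bot ::ₘ Γ, Δ)
  | impL {c : Bool} {Γ Δ : Multiset Fml} {A B : Fml} :
      GrzSeq c (B ::ₘ Γ, Δ) → GrzSeq c (Γ, A ::ₘ Δ) →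
      GrzSeq c (Fml.imp A B ::ₘ Γ, Δ)
  | impR {c : Bool} {Γ Δ : Multiset Fml} {A B : Fml} :
      GrzSeq c (A ::ₘ Γ, B ::ₘ Δ) → GrzSeq c (Γ, Fml.imp A B ::ₘ Δ)
  | refl {c : Bool} {Γ Δ : Multiset Fml} {B : Fml} :
      GrzSeq c (B ::ₘ Fml.box B ::ₘ Γ, Δ) → GrzSeq c (Fml.box B ::ₘ Γ, Δ)
  | boxGrz {c : Bool} (Γ : Multiset Fml) {Φ : Multiset Fml} {A : Fml} (Δ : Multiset Fml) :
      GrzSeq c (Fml.box (Fml.imp A (Fml.box A)) ::ₘ Φ.map Fml.box, ({A} : Multiset Fml)) →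
      GrzSeq c (Γ + Φ.map Fml.box, Fml.box A ::ₘ Δ)
  | cut {Γ Δ : Multiset Fml} {A : Fml} :
      GrzSeq true (Γ, A ::ₘ Δ) → GrzSeq true (A ::ₘ Γ, Δ) → GrzSeq true (Γ, Δ)

/-- Tags for the inference rules of `Grz_∞ (+ cut)`. -/
inductive RuleTag : Type
  | ax | axBot | impL | impR | refl | box | cut
deriving DecidableEq

/-- Local correctness of a rule application in `Grz_∞` (cut allowed when the
Boolean parameter is `true`): it relates the conclusion sequent, the rule tag
and the (optional) first and second premises.  For the rule `(□)`, the second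
premise is its right premise. -/
inductive Rules : Bool → Sequent → RuleTag → Option Sequent → Option Sequent → Prop
  | ax (c : Bool) (Γ Δ : Multiset Fml) (p : ℕ) :
      Rules c (Fml.var p ::ₘ Γ, Fml.var p ::ₘ Δ) RuleTag.ax none none
  | axBot (c : Bool) (Γ Δ : Multiset Fml) :
      Rules c (Fml.bot ::ₘ Γ, Δ) RuleTag.axBot none none
  | impL (c : Bool) (Γ Δ : Multiset Fml) (A B : Fml) :
      Rules c (Fml.imp A B ::ₘ Γ, Δ) RuleTag.impL
        (some (B ::ₘ Γ, Δ)) (some (Γ, A ::ₘ Δ))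
  | impR (c : Bool) (Γ Δ : Multiset Fml) (A B : Fml) :
      Rules c (Γ, Fml.imp A B ::ₘ Δ) RuleTag.impR
        (some (A ::ₘ Γ, B ::ₘ Δ)) none
  | refl (c : Bool) (Γ Δ : Multiset Fml) (B : Fml) :
      Rules c (Fml.box B ::ₘ Γ, Δ) RuleTag.refl
        (some (B ::ₘ Fml.box B ::ₘ Γ, Δ)) none
  | box (c : Bool) (Γ Φ Δ : Multiset Fml) (A : Fml) :
      Rules c (Γ + Φ.map Fml.box, Fml.box A ::ₘ Δ) RuleTag.box
        (some (Γ + Φ.map Fml.box, A ::ₘ Δ)) (some (Φ.map Fml.box, ({A} : Multiset Fml)))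
  | cut (Γ Δ : Multiset Fml) (A : Fml) :
      Rules true (Γ, Δ) RuleTag.cut (some (Γ, A ::ₘ Δ)) (some (A ::ₘ Γ, Δ))

/-- An ∞-proof in `Grz_∞` (`c = false`) or `Grz_∞ + cut` (`c = true`): a
possibly infinite tree (nodes are adressed by lists of Booleans, `false`
pointing to the first premise and `true` to the second premise) of sequents
together with applied rules, constructed according to the rules, whose leaves
are initial sequents, and in which every infinite branch passes through a
right premise of the rule `(□)` infinitely many times. -/
structure InfProof (c : Bool) : Type where
  node : List Bool → Option (Sequent × RuleTag)
  root_isSome : (node []).isSome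
  closed : ∀ (p : List Bool) (i : Bool), node p = none → node (p ++ [i]) = none
  correct : ∀ (p : List Bool) (s : Sequent) (r : RuleTag), node p = some (s, r) →
    Rules c s r ((node (p ++ [false])).map Prod.fst) ((node (p ++ [true])).map Prod.fst)
  guard : ∀ f : ℕ → Bool, (∀ n : ℕ, (node ((List.range n).map f)).isSome) →
    ∀ N : ℕ, ∃ n : ℕ, N ≤ n ∧ f n = true ∧
      (node ((List.range n).map f)).map Prod.snd = some RuleTag.box

/-- The sequent at the root of an ∞-proof. -/
def rootSeq {c : Bool} (π : InfProof c) : Sequent :=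
  ((π.node []).getD (((0 : Multiset Fml), (0 : Multiset Fml)), RuleTag.ax)).1

/-- A sequent is provable in `Grz_∞ (+ cut)` if it has an ∞-proof with that
sequent at the root. -/
def ProvableInf (c : Bool) (s : Sequent) : Prop := ∃ π : InfProof c, rootSeq π = s

/-- The number of right premises of the rule `(□)` strictly below the node
addressed by `p` in the ∞-proof `π`. -/
def countBR {c : Bool} (π : InfProof c) (p : List Bool) : ℕ :=
  ((List.range p.length).filter fun i =>
    p.getD i false && decide ((π.node (p.take i)).map Prod.snd = some RuleTag.box)).length

/-- `Frag n π τ` means that the `n`-fragments of `π` and `τ` coincide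
(`π ∼_n τ`): the trees agree on every node lying strictly before the `n`-th
right premise of `(□)` on its branch. -/
def Frag {c : Bool} (n : ℕ) (π τ : InfProof c) : Prop :=
  ∀ p : List Bool, countBR π p < n → π.node p = τ.node p

/-- The local pheight `|π|`: the length of the longest branch in the main
(1-)fragment of `π`. -/
noncomputable def pheight {c : Bool} (π : InfProof c) : ℕ :=
  sSup { n : ℕ | ∃ p : List Bool, p.length = n ∧ (π.node p).isSome ∧ countBR π p = 0 }

/-- Membership in `P_n`: the ∞-proof contains no applications of the cut rule
in its `n`-fragment. -/
def CutFreeIn {c : Bool} (n : ℕ) (π : InfProof c) : Prop :=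
  ∀ p : List Bool, countBR π p < n → (π.node p).map Prod.snd ≠ some RuleTag.cut

/-- A non-expansive mapping on ∞-proofs. -/
def NonExp {c : Bool} (u : InfProof c → InfProof c) : Prop :=
  ∀ (n : ℕ) (π π' : InfProof c), Frag n π π' → Frag n (u π) (u π')

/-- An adequate mapping on ∞-proofs: it preserves each `P_n`. -/
def Adequate {c : Bool} (u : InfProof c → InfProof c) : Prop :=
  ∀ (n : ℕ) (π : InfProof c), CutFreeIn n π → CutFreeIn n (u π)


/-!
`Λ*, Γ ⇒ Δ` is derived node by node along the ∞-proof. Rules other than `(□)` are simulated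
directly. At a `(□)` node with conclusion `Γ, □Φ ⇒ □A, Δ`: if `A ∈ Λ`, the hypothesis
`□(A → □A)` turns `A` into `□A`, so only the left premise is needed; if `A ∉ Λ`, the rule
`(□_Grz)` applied to the right premise `□Φ ⇒ A`, proved with `Λ` enlarged by `A`, gives the
conclusion. All formulas of the ∞-proof are subformulas of the root sequent, so `Λ` can be
enlarged only finitely often: the proof is by induction on the number of those subformulas outside
`Λ`, and for fixed `Λ` by induction along the edges that are not right premises of `(□)`.
-/

/-- `□(A → □A)`, so that `Λ*` is `Λ.val.map Fml.star`. -/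
def Fml.star (A : Fml) : Fml := Fml.box (Fml.imp A (Fml.box A))

def Fml.subs : Fml → Finset Fml
  | .bot => {.bot}
  | .var n => {.var n}
  | .imp A B => insert (.imp A B) (A.subs ∪ B.subs)
  | .box A => insert (.box A) A.subs

theorem Fml.mem_subs_self (A : Fml) : A ∈ A.subs := by
  cases A <;> simp [Fml.subs]

def SubformulasIn (S : Finset Fml) (s : Sequent) : Prop :=
  ∀ A ∈ s.1 + s.2, A.subs ⊆ S

theorem Rules.subformulasIn {s : Sequent} {r : RuleTag} {o1 o2 : Option Sequent}
    (h : Rules false s r o1 o2) {S : Finset Fml} (hs : SubformulasIn S s) (t : Sequent)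
    (ht : o1 = some t ∨ o2 = some t) : SubformulasIn S t := by
  cases h <;> simp only [reduceCtorEq, Option.some.injEq, or_false] at ht <;>
    rcases ht with rfl | rfl <;>
    simp_all [SubformulasIn, Fml.subs, Finset.insert_subset_iff, Finset.union_subset_iff, or_imp,
      forall_and]

namespace GrzSeq

theorem of_eq {c : Bool} {Γ Δ Γ' Δ' : Multiset Fml} (h : GrzSeq c (Γ, Δ))
    (hΓ : Γ = Γ') (hΔ : Δ = Δ') : GrzSeq c (Γ', Δ') := hΓ ▸ hΔ ▸ h

theorem weaken {c : Bool} {s : Sequent} (h : GrzSeq c s) (Γ' Δ' : Multiset Fml) :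
    GrzSeq c (s.1 + Γ', s.2 + Δ') := by
  induction h with
  | ax c Γ Δ A => simpa only [Multiset.cons_add] using ax c (Γ + Γ') (Δ + Δ') A
  | axBot c Γ Δ => simpa only [Multiset.cons_add] using axBot c (Γ + Γ') (Δ + Δ')
  | impL _ _ ih₁ ih₂ =>
      simp only [Multiset.cons_add] at ih₁ ih₂ ⊢
      exact impL ih₁ ih₂
  | impR _ ih => simp only [Multiset.cons_add] at ih ⊢; exact impR ih
  | refl _ ih => simp only [Multiset.cons_add] at ih ⊢; exact refl ih
  | boxGrz Γ Δ h _ =>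
      refine (boxGrz (Γ + Γ') (Δ + Δ') h).of_eq ?_ ?_ <;>
        simp only [← Multiset.singleton_add] <;> abel
  | cut _ _ ih₁ ih₂ =>
      simp only [Multiset.cons_add] at ih₁ ih₂ ⊢
      exact cut ih₁ ih₂

theorem box_of_star {c : Bool} {M Δ : Multiset Fml} {A : Fml}
    (h : GrzSeq c (A.star ::ₘ M, A ::ₘ Δ)) : GrzSeq c (A.star ::ₘ M, Fml.box A ::ₘ Δ) := by
  refine refl (impL (ax c _ _ (Fml.box A)) ((h.weaken 0 {Fml.box A}).of_eq ?_ ?_))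
  · simp [Fml.star]
  · simp only [← Multiset.singleton_add]; abel

theorem boxGrz_of_star {c : Bool} (Λ Γ Φ Δ : Multiset Fml) {A : Fml}
    (h : GrzSeq c (A.star ::ₘ (Λ.map Fml.star + Φ.map Fml.box), {A})) :
    GrzSeq c (Λ.map Fml.star + (Γ + Φ.map Fml.box), Fml.box A ::ₘ Δ) := by
  have hΛ : Λ.map Fml.star + Φ.map Fml.box
      = (Λ.map (fun B => Fml.imp B (Fml.box B)) + Φ).map Fml.box := by
    rw [Multiset.map_add, Multiset.map_map]; rfl
  rw [hΛ] at h
  refine (boxGrz Γ Δ h).of_eq ?_ rfl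
  rw [← hΛ]; abel

end GrzSeq

namespace InfProof

variable {c : Bool} (π : InfProof c)

theorem isSome_of_isSome_append {p : List Bool} (q : List Bool)
    (h : (π.node (p ++ q)).isSome) : (π.node p).isSome := by
  induction q using List.reverseRecOn with
  | nil => simpa using h
  | append_singleton q i ih =>
      rw [← List.append_assoc] at h
      refine ih ?_
      by_contra hq
      rw [π.closed _ i (Option.not_isSome_iff_eq_none.1 hq)] at h
      exact absurd h (by simp)

theorem forall_node_of_root (Q : Sequent → Prop) (hroot : Q (rootSeq π))
    (hrules : ∀ s r o1 o2, Rules c s r o1 o2 → Q s → ∀ t, o1 = some t ∨ o2 = some t → Q t)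
    (p : List Bool) (s : Sequent) (r : RuleTag) (hp : π.node p = some (s, r)) : Q s := by
  induction p using List.reverseRecOn generalizing s r with
  | nil => rwa [rootSeq, hp] at hroot
  | append_singleton q i ih =>
      obtain ⟨⟨s', r'⟩, hq⟩ := Option.isSome_iff_exists.1
        (π.isSome_of_isSome_append (p := q) [i] (by rw [hp]; rfl))
      refine hrules _ _ _ _ (π.correct q s' r' hq) (ih s' r' hq) s ?_
      cases i <;> simp [hp]

/-- By the guard condition, no infinite branch of `π` avoids right premises of `(□)`, so induction
along the other edges is well-founded. -/
theorem induction_boxFree (P : List Bool → Prop)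
    (step : ∀ p, (π.node p).isSome →
      (∀ i, ((π.node p).map Prod.snd = some RuleTag.box → i = false) →
        (π.node (p ++ [i])).isSome → P (p ++ [i])) → P p)
    (p : List Bool) (hp : (π.node p).isSome) : P p := by
  by_contra hbad
  have child : ∀ q : {q // (π.node q).isSome ∧ ¬ P q}, ∃ i,
      ((π.node q.1).map Prod.snd = some RuleTag.box → i = false) ∧
        (π.node (q.1 ++ [i])).isSome ∧ ¬ P (q.1 ++ [i]) := by
    rintro ⟨q, hq, hPq⟩
    by_contra! h
    exact hPq (step q hq h)
  choose bit hbitBox hbitBad using child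
  let path : ℕ → {q // (π.node q).isSome ∧ ¬ P q} := fun n =>
    Nat.rec ⟨p, hp, hbad⟩ (fun _ q => ⟨q.1 ++ [bit q], hbitBad q⟩) n
  let f : ℕ → Bool := fun k => if h : k < p.length then p[k] else bit (path (k - p.length))
  have hf : ∀ n, f (p.length + n) = bit (path n) := fun n => by simp [f]
  have hpath : ∀ n, (List.range (p.length + n)).map f = (path n).1 := by
    intro n
    induction n with
    | zero =>
        show (List.range p.length).map f = p
        exact List.ext_getElem (by simp) fun k hk _ => by simp_all [f]
    | succ n ih =>
        rw [← Nat.add_assoc, List.range_succ, List.map_append, ih, List.map_singleton, hf]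
  have hsome : ∀ k, (π.node ((List.range k).map f)).isSome := by
    intro k
    refine π.isSome_of_isSome_append ((List.range p.length).map (f ∘ (k + ·))) ?_
    rw [← List.map_map, ← List.map_append, ← List.range_add, Nat.add_comm, hpath]
    exact (path k).2.1
  obtain ⟨n, hn, hfn, hbox⟩ := π.guard f hsome p.length
  obtain ⟨m, rfl⟩ := Nat.exists_eq_add_of_le hn
  rw [hpath] at hbox
  rw [hf, hbitBox (path m) hbox] at hfn
  exact Bool.false_ne_true hfn

end InfProof

def StarProvable (Λ : Finset Fml) (s : Sequent) : Prop :=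
  GrzSeq false (Λ.val.map Fml.star + s.1, s.2)

theorem map_star_insert {Λ : Finset Fml} {A : Fml} (hA : A ∉ Λ) :
    (insert A Λ).val.map Fml.star = A.star ::ₘ Λ.val.map Fml.star := by
  rw [Finset.insert_val_of_notMem hA, Multiset.map_cons]

theorem Rules.starProvable_of_premises {s : Sequent} {r : RuleTag} {o1 o2 : Option Sequent}
    (h : Rules false s r o1 o2) {Λ : Finset Fml}
    (h1 : ∀ t, o1 = some t → StarProvable Λ t)
    (h2 : r ≠ RuleTag.box → ∀ t, o2 = some t → StarProvable Λ t)
    (h2box : ∀ t A, o2 = some t → A ∉ Λ → A ∈ t.2 → StarProvable (insert A Λ) t) :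
    StarProvable Λ s := by
  unfold StarProvable at *
  cases h with
  | ax _ Γ Δ p => rw [Multiset.add_cons]; exact .ax _ _ _ _
  | axBot _ Γ Δ => rw [Multiset.add_cons]; exact .axBot _ _ _
  | impL _ Γ Δ A B =>
      have hB := h1 _ rfl
      rw [Multiset.add_cons] at hB ⊢
      exact .impL hB (h2 (by simp) _ rfl)
  | impR _ Γ Δ A B =>
      have hA := h1 _ rfl
      rw [Multiset.add_cons] at hA
      exact .impR hA
  | refl _ Γ Δ B =>
      have hB := h1 _ rfl
      rw [Multiset.add_cons, Multiset.add_cons] at hB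
      rw [Multiset.add_cons]
      exact .refl hB
  | box _ Γ Φ Δ A =>
      by_cases hA : A ∈ Λ
      · have hΛ := map_star_insert (Finset.notMem_erase A Λ)
        rw [Finset.insert_erase hA] at hΛ
        have hA' := h1 _ rfl
        rw [hΛ, Multiset.cons_add] at hA' ⊢
        exact hA'.box_of_star
      · have hA' := h2box _ A rfl hA (Multiset.mem_singleton_self A)
        rw [map_star_insert hA, Multiset.cons_add] at hA'
        exact GrzSeq.boxGrz_of_star _ _ _ _ hA'

theorem InfProof.starProvable_of_subformulasIn (π : InfProof false) (S : Finset Fml)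
    (hS : ∀ p s r, π.node p = some (s, r) → SubformulasIn S s) (Λ : Finset Fml)
    (p : List Bool) (s : Sequent) (r : RuleTag) (hp : π.node p = some (s, r)) :
    StarProvable Λ s := by
  induction hk : (S \ Λ).card using Nat.strong_induction_on generalizing Λ p s r with
  | _ k ih =>
  refine π.induction_boxFree (fun q => ∀ s r, π.node q = some (s, r) → StarProvable Λ s)
    (fun q _ hchild s r hq => ?_) p (by simp [hp]) s r hp
  have child : ∀ i t, ((π.node q).map Prod.snd = some RuleTag.box → i = false) →
      (π.node (q ++ [i])).map Prod.fst = some t → StarProvable Λ t := by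
    intro i t hi ht
    obtain ⟨⟨t, r'⟩, hn, rfl⟩ := Option.map_eq_some_iff.1 ht
    exact hchild i hi (by simp [hn]) t r' hn
  refine (π.correct q s r hq).starProvable_of_premises (child false · fun _ => rfl)
    (fun hr t => child true t fun hb => absurd (by simpa [hq] using hb) hr) ?_
  intro t A ht hA hAt
  obtain ⟨⟨t, r'⟩, hn, rfl⟩ := Option.map_eq_some_iff.1 ht
  have hAS : A ∈ S := hS _ _ _ hn A (Multiset.mem_add.2 (Or.inr hAt)) A.mem_subs_self
  have hlt : (S \ insert A Λ).card < k := by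
    rw [← hk, Finset.sdiff_insert]
    exact Finset.card_erase_lt_of_mem (Finset.mem_sdiff.2 ⟨hAS, hA⟩)
  exact ih _ hlt (insert A Λ) _ t r' hn rfl

/-- If `Γ ⇒ Δ` is provable in `Grz_∞`, then for every finite set of formulas
`Λ` the sequent `Λ*, Γ ⇒ Δ` is provable in `Grz_Seq`, where
`Λ* = {□(A → □A) : A ∈ Λ}`. -/
theorem grzInf_to_grzSeq_with_star (Γ Δ : Multiset Fml)
    (h : ProvableInf false (Γ, Δ)) (Λ : Finset Fml) :
    GrzSeq false (Λ.val.map (fun A => Fml.box (Fml.imp A (Fml.box A))) + Γ, Δ) := by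
  obtain ⟨π, hroot⟩ := h
  obtain ⟨⟨s, r⟩, hs⟩ := Option.isSome_iff_exists.1 π.root_isSome
  have hsΓΔ : s = (Γ, Δ) := by rw [← hroot, rootSeq, hs]; rfl
  subst hsΓΔ
  let S := (Γ + Δ).toFinset.biUnion Fml.subs
  have hS : SubformulasIn S (Γ, Δ) := fun A hA =>
    Finset.subset_biUnion_of_mem Fml.subs (Multiset.mem_toFinset.2 hA)
  exact π.starProvable_of_subformulasIn S
    (π.forall_node_of_root _ (hroot ▸ hS) fun _ _ _ _ hr hs => hr.subformulasIn hs) Λ [] _ r hs
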